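/- arXiv:1609.00411 — 2 statements merged into one kernel-verified Lean document; each statement's English description precedes it below -/
import Mathlib

section
/- Let X be a complete metric space and let {S(t,τ) : t ≥ τ ∈ ℝ} be an evolution process on X. Assume that S is pullback strongly bounded dissipative and pullback asymptotically compact. Then S has a pullback attractor {𝔸(t) : t ∈ ℝ}: a family of subsets of X such that (i) 𝔸(t) is compact for every t ∈ ℝ; (ii) the family is invariant, i.e. S(t,τ)𝔸(τ) = 𝔸(t) for all t ≥ τ; (iii) for each t ∈ ℝ and each bounded subset B of X, dist_H(S(t,τ)B, 𝔸(t)) → 0 as τ → −∞. Moreover, for each t ∈ ℝ the set ⋃_{τ ≤ t} 𝔸(τ) is bounded. -/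
open Filter Bornology

/-- The Hausdorff semidistance `dist_H(A,B) = sup_{a∈A} inf_{b∈B} d(a,b)`,
valued in `ℝ≥0∞`. -/
noncomputable def hausdorffSemidist {X : Type*} [MetricSpace X]
    (A B : Set X) : ENNReal :=
  ⨆ a ∈ A, EMetric.infEdist a B

namespace Stmt7Aux

variable {X : Type*} [MetricSpace X]

def ol (S : ℝ → ℝ → X → X) (B : Set X) (t : ℝ) : Set X :=
  {y | ∃ σ : ℕ → ℝ, ∃ x : ℕ → X, (∀ n, σ n ≤ t) ∧ Tendsto σ atTop atBot ∧
      (∀ n, x n ∈ B) ∧ Tendsto (fun n => S t (σ n) (x n)) atTop (nhds y)}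

lemma tendsto_neg_nat : Tendsto (fun k : ℕ => -(k : ℝ)) atTop atBot :=
  tendsto_neg_atBot_iff.2 tendsto_natCast_atTop_atTop

lemma tendsto_min_neg (t : ℝ) : Tendsto (fun k : ℕ => min t (-(k : ℝ))) atTop atBot :=
  tendsto_atBot_mono (fun _ => min_le_right _ _) tendsto_neg_nat

lemma one_div_succ_tendsto : Tendsto (fun k : ℕ => 1 / ((k : ℝ) + 1)) atTop (nhds 0) :=
  tendsto_one_div_add_atTop_nhds_zero_nat

lemma one_div_succ_le {k n : ℕ} (h : k ≤ n) : 1 / ((n : ℝ) + 1) ≤ 1 / ((k : ℝ) + 1) := by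
  apply one_div_le_one_div_of_le <;> [positivity; exact_mod_cast by omega]

lemma tendsto_of_dist_le {g : ℕ → X} {y : X} {c : ℕ → ℝ}
    (hc : Tendsto c atTop (nhds 0)) (h : ∀ k, dist (g k) y ≤ c k) :
    Tendsto g atTop (nhds y) :=
  tendsto_iff_dist_tendsto_zero.2 (squeeze_zero (fun _ => dist_nonneg) h hc)

lemma sel {S : ℝ → ℝ → X → X} {B : Set X} {t : ℝ} {y : X} (hy : y ∈ ol S B t)
    (m : ℝ) {r : ℝ} (hr : 0 < r) :
    ∃ τ, τ ≤ min t m ∧ ∃ z ∈ B, dist (S t τ z) y < r := by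
  obtain ⟨σ, x, hσt, hσ, hxB, hconv⟩ := hy
  obtain ⟨N1, hN1⟩ := eventually_atTop.1 (hσ.eventually_le_atBot (min t m))
  obtain ⟨N2, hN2⟩ := Metric.tendsto_atTop.1 hconv r hr
  exact ⟨σ (max N1 N2), hN1 _ (le_max_left _ _), x (max N1 N2), hxB _,
    hN2 _ (le_max_right _ _)⟩

lemma ol_subset_ol {S : ℝ → ℝ → X → X}
    (hComp : ∀ t σ τ : ℝ, τ ≤ σ → σ ≤ t → ∀ x : X, S t σ (S σ τ x) = S t τ x)
    {B C : Set X} {t : ℝ}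
    (habs : ∀ s, s ≤ t → ∃ τ₀ ≤ s, ∀ τ ≤ τ₀, S s τ '' B ⊆ C)
    {σ : ℕ → ℝ} {x : ℕ → X} (hσ : Tendsto σ atTop atBot)
    (hxB : ∀ n, x n ∈ B) {y : X}
    (hconv : Tendsto (fun n => S t (σ n) (x n)) atTop (nhds y)) :
    y ∈ ol S C t := by
  have key : ∀ k : ℕ, ∃ z ∈ C, dist (S t (min t (-(k : ℝ))) z) y < 1 / ((k : ℝ) + 1) := by
    intro k
    obtain ⟨τ₀, hτ₀, habs'⟩ := habs (min t (-(k : ℝ))) (min_le_left _ _)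
    obtain ⟨N1, hN1⟩ := eventually_atTop.1 (hσ.eventually_le_atBot τ₀)
    obtain ⟨N2, hN2⟩ := Metric.tendsto_atTop.1 hconv _
      (by positivity : (0 : ℝ) < 1 / ((k : ℝ) + 1))
    set n := max N1 N2 with hn
    refine ⟨S (min t (-(k : ℝ))) (σ n) (x n),
      habs' (σ n) (hN1 _ (le_max_left _ _)) ⟨x n, hxB n, rfl⟩, ?_⟩
    rw [hComp t (min t (-(k : ℝ))) (σ n) (le_trans (hN1 _ (le_max_left _ _)) hτ₀)
      (min_le_left _ _)]
    exact hN2 _ (le_max_right _ _)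
  choose z hzC hz using key
  exact ⟨fun k => min t (-(k : ℝ)), z, fun _ => min_le_left _ _, tendsto_min_neg t,
    hzC, tendsto_of_dist_le one_div_succ_tendsto (fun k => (hz k).le)⟩

lemma bounded_range_of_eventually {g : ℕ → X} {C : Set X} (hC : IsBounded C)
    (N : ℕ) (h : ∀ n, N ≤ n → g n ∈ C) : IsBounded (Set.range g) := by
  have hsub : Set.range g ⊆ g '' Set.Iic N ∪ C := by
    rintro _ ⟨n, rfl⟩
    rcases le_or_gt n N with hn | hn
    · exact Or.inl ⟨n, hn, rfl⟩
    · exact Or.inr (h n hn.le)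
  exact (((Set.finite_Iic N).image g).isBounded.union hC).subset hsub

end Stmt7Aux

/-- Existence of pullback attractors: a pullback strongly bounded dissipative
and pullback asymptotically compact evolution process `S` on a complete metric
space has a pullback attractor `𝔸` with `⋃_{τ ≤ t} 𝔸(τ)` bounded for each
`t`. -/
theorem stmt7
    {X : Type*} [MetricSpace X] [CompleteSpace X]
    (S : ℝ → ℝ → X → X)
    -- `S` is an evolution process:
    (hId : ∀ τ : ℝ, ∀ x : X, S τ τ x = x)
    (hComp : ∀ t σ τ : ℝ, τ ≤ σ → σ ≤ t → ∀ x : X, S t σ (S σ τ x) = S t τ x)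
    (hCont : ContinuousOn (fun p : (ℝ × ℝ) × X => S p.1.1 p.1.2 p.2)
      {p : (ℝ × ℝ) × X | p.1.2 ≤ p.1.1})
    -- `S` is pullback strongly bounded dissipative:
    (hDiss : ∀ t : ℝ, ∃ Bt : Set X, IsBounded Bt ∧
      ∀ B : Set X, IsBounded B → ∀ s ≤ t, ∃ τ₀ ≤ s, ∀ τ ≤ τ₀, S s τ '' B ⊆ Bt)
    -- `S` is pullback asymptotically compact:
    (hAC : ∀ t : ℝ, ∀ τ : ℕ → ℝ, (∀ n, τ n ≤ t) → Tendsto τ atTop atBot →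
      ∀ x : ℕ → X, IsBounded (Set.range x) →
        IsBounded (Set.range fun n => S t (τ n) (x n)) →
        ∃ φ : ℕ → ℕ, StrictMono φ ∧ ∃ y : X,
          Tendsto (fun n => S t (τ (φ n)) (x (φ n))) atTop (nhds y)) :
    ∃ 𝔸 : ℝ → Set X,
      -- (i) each section is compact:
      (∀ t : ℝ, IsCompact (𝔸 t)) ∧
      -- (ii) invariance:
      (∀ t τ : ℝ, τ ≤ t → S t τ '' 𝔸 τ = 𝔸 t) ∧
      -- (iii) pullback attraction of bounded sets:
      (∀ t : ℝ, ∀ B : Set X, IsBounded B →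
        Tendsto (fun τ => hausdorffSemidist (S t τ '' B) (𝔸 t)) atBot (nhds 0)) ∧
      -- uniform boundedness of past sections:
      (∀ t : ℝ, IsBounded (⋃ τ ∈ Set.Iic t, 𝔸 τ)) := by
  classical
  choose Bt hBtBdd hBtAbs using hDiss
  set 𝔸 : ℝ → Set X := fun t => Stmt7Aux.ol S (Bt t) t with h𝔸
  -- continuity of x ↦ S t τ x for τ ≤ t
  have hScont : ∀ {t τ : ℝ}, τ ≤ t → Continuous (fun x : X => S t τ x) := by
    intro t τ hτ
    have hc : Continuous (fun x : X => (((t, τ) : ℝ × ℝ), x)) := by continuity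
    exact hCont.comp_continuous hc (fun x => hτ)
  -- past sections inside closure of absorbing set
  have hsub : ∀ s t : ℝ, s ≤ t → 𝔸 s ⊆ closure (Bt t) := by
    intro s t hst y hy
    obtain ⟨σ, x, hσs, hσ, hxB, hconv⟩ := hy
    obtain ⟨τ₀, hτ₀, habs⟩ := hBtAbs t (Bt s) (hBtBdd s) s hst
    refine mem_closure_of_tendsto hconv ?_
    filter_upwards [hσ.eventually_le_atBot τ₀] with n hn
    exact habs (σ n) hn ⟨x n, hxB n, rfl⟩
  have hbdd : ∀ t : ℝ, IsBounded (⋃ τ ∈ Set.Iic t, 𝔸 τ) := by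
    intro t
    exact ((hBtBdd t).closure).subset (Set.iUnion₂_subset fun s hs => hsub s t hs)
  -- compactness
  have hcomp : ∀ t : ℝ, IsCompact (𝔸 t) := by
    intro t
    have hA_bdd : 𝔸 t ⊆ closure (Bt t) := hsub t t le_rfl
    have hseq : IsSeqCompact (𝔸 t) := by
      intro y hy
      have key : ∀ k : ℕ, ∃ τ, τ ≤ min t (-(k : ℝ)) ∧ ∃ z ∈ Bt t,
          dist (S t τ z) (y k) < 1 / ((k : ℝ) + 1) :=
        fun k => Stmt7Aux.sel (hy k) (-(k : ℝ)) (by positivity)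
      choose τ hτ z hzB hdz using key
      have hτt : ∀ k, τ k ≤ t := fun k => (hτ k).trans (min_le_left _ _)
      have hτBot : Tendsto τ atTop atBot :=
        tendsto_atBot_mono (fun k => hτ k) (Stmt7Aux.tendsto_min_neg t)
      have hzbdd : IsBounded (Set.range z) :=
        (hBtBdd t).subset (Set.range_subset_iff.2 hzB)
      have himg : IsBounded (Set.range fun k => S t (τ k) (z k)) := by
        refine ((hBtBdd t).closure.cthickening (δ := 1)).subset ?_
        rintro _ ⟨k, rfl⟩
        refine Metric.mem_cthickening_of_dist_le _ (y k) 1 _ (hA_bdd (hy k)) ?_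
        refine (hdz k).le.trans ?_
        rw [div_le_one (by positivity)]
        linarith [Nat.cast_nonneg (α := ℝ) k]
      obtain ⟨φ, hφ, w, hw⟩ := hAC t τ hτt hτBot z hzbdd himg
      refine ⟨w, ⟨fun k => τ (φ k), fun k => z (φ k), fun k => hτt _,
        hτBot.comp hφ.tendsto_atTop, fun k => hzB _, hw⟩, φ, hφ, ?_⟩
      refine Stmt7Aux.tendsto_of_dist_le
        (c := fun k => 1 / ((k : ℝ) + 1) + dist (S t (τ (φ k)) (z (φ k))) w) ?_ ?_
      · simpa using Stmt7Aux.one_div_succ_tendsto.add (tendsto_iff_dist_tendsto_zero.1 hw)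
      · intro k
        calc dist (y (φ k)) w
            ≤ dist (y (φ k)) (S t (τ (φ k)) (z (φ k))) + dist (S t (τ (φ k)) (z (φ k))) w :=
              dist_triangle _ _ _
          _ ≤ 1 / ((k : ℝ) + 1) + dist (S t (τ (φ k)) (z (φ k))) w := by
              have := (hdz (φ k)).le
              rw [dist_comm] at this
              exact add_le_add (this.trans (Stmt7Aux.one_div_succ_le (hφ.le_apply))) le_rfl
    exact hseq.isCompact
  -- invariance
  have hinv : ∀ t τ : ℝ, τ ≤ t → S t τ '' 𝔸 τ = 𝔸 t := by
    intro t τ hτt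
    apply Set.Subset.antisymm
    · rintro _ ⟨y, hy, rfl⟩
      obtain ⟨σ, x, hσs, hσ, hxB, hconv⟩ := hy
      have hconv' : Tendsto (fun n => S t (σ n) (x n)) atTop (nhds (S t τ y)) := by
        have h1 := (((hScont hτt).tendsto y).comp hconv)
        exact h1.congr fun n => hComp t τ (σ n) (hσs n) hτt (x n)
      exact Stmt7Aux.ol_subset_ol hComp (fun s hs => hBtAbs t (Bt τ) (hBtBdd τ) s hs)
        hσ hxB hconv'
    · intro y hy
      obtain ⟨τ₀, hτ₀, habs⟩ := hBtAbs t (Bt t) (hBtBdd t) τ hτt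
      have key : ∀ k : ℕ, ∃ s, s ≤ min t (min τ₀ (-(k : ℝ))) ∧ ∃ z ∈ Bt t,
          dist (S t s z) y < 1 / ((k : ℝ) + 1) :=
        fun k => Stmt7Aux.sel hy _ (by positivity)
      choose s hs z hzB hdz using key
      have hsτ₀ : ∀ k, s k ≤ τ₀ :=
        fun k => (hs k).trans ((min_le_right _ _).trans (min_le_left _ _))
      have hsτ : ∀ k, s k ≤ τ := fun k => (hsτ₀ k).trans hτ₀
      have hsBot : Tendsto s atTop atBot :=
        tendsto_atBot_mono
          (fun k => (hs k).trans ((min_le_right _ _).trans (min_le_right _ _)))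
          Stmt7Aux.tendsto_neg_nat
      have hw : ∀ k, S τ (s k) (z k) ∈ Bt t := fun k => habs (s k) (hsτ₀ k) ⟨z k, hzB k, rfl⟩
      obtain ⟨φ, hφ, w, hwconv⟩ := hAC τ s hsτ hsBot z
        ((hBtBdd t).subset (Set.range_subset_iff.2 hzB))
        ((hBtBdd t).subset (Set.range_subset_iff.2 hw))
      have hwA : w ∈ 𝔸 τ :=
        Stmt7Aux.ol_subset_ol hComp (fun u hu => hBtAbs τ (Bt t) (hBtBdd t) u hu)
          (hsBot.comp hφ.tendsto_atTop) (fun k => hzB (φ k)) hwconv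
      refine ⟨w, hwA, ?_⟩
      have h1 : Tendsto (fun k => S t (s (φ k)) (z (φ k))) atTop (nhds (S t τ w)) := by
        have h2 := ((hScont hτt).tendsto w).comp hwconv
        exact h2.congr fun k => hComp t τ (s (φ k)) (hsτ _) hτt (z (φ k))
      have h2 : Tendsto (fun k => S t (s (φ k)) (z (φ k))) atTop (nhds y) :=
        Stmt7Aux.tendsto_of_dist_le Stmt7Aux.one_div_succ_tendsto
          (fun k => (hdz (φ k)).le.trans (Stmt7Aux.one_div_succ_le hφ.le_apply))
      exact tendsto_nhds_unique h1 h2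
  -- attraction
  have hattr : ∀ t : ℝ, ∀ B : Set X, IsBounded B →
      Tendsto (fun τ => hausdorffSemidist (S t τ '' B) (𝔸 t)) atBot (nhds 0) := by
    intro t B hB
    rw [ENNReal.tendsto_nhds_zero]
    intro ε hε
    by_contra hcon
    rw [not_eventually] at hcon
    have hsel : ∀ k : ℕ, ∃ τ, τ ≤ min t (-(k : ℝ)) ∧ ∃ x ∈ B,
        ε < EMetric.infEdist (S t τ x) (𝔸 t) := by
      intro k
      obtain ⟨τ, hτ, hfτ⟩ := frequently_atBot.1 hcon (min t (-(k : ℝ)))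
      rw [not_le, hausdorffSemidist, lt_iSup_iff] at hfτ
      obtain ⟨a, ha⟩ := hfτ
      rw [lt_iSup_iff] at ha
      obtain ⟨⟨x, hxB, rfl⟩, hlt⟩ := ha
      exact ⟨τ, hτ, x, hxB, hlt⟩
    choose τ hτ x hxB hlt using hsel
    have hτt : ∀ k, τ k ≤ t := fun k => (hτ k).trans (min_le_left _ _)
    have hτBot : Tendsto τ atTop atBot :=
      tendsto_atBot_mono (fun k => hτ k) (Stmt7Aux.tendsto_min_neg t)
    obtain ⟨τ₀, hτ₀, habs⟩ := hBtAbs t B hB t le_rfl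
    have himg : IsBounded (Set.range fun k => S t (τ k) (x k)) := by
      refine Stmt7Aux.bounded_range_of_eventually (hBtBdd t) ⌈-τ₀⌉₊ ?_
      intro n hn
      refine habs (τ n) ?_ ⟨x n, hxB n, rfl⟩
      have h1 : -τ₀ ≤ (n : ℝ) := (Nat.le_ceil _).trans (by exact_mod_cast hn)
      have h2 : -(n : ℝ) ≤ τ₀ := by linarith
      exact (hτ n).trans ((min_le_right _ _).trans h2)
    obtain ⟨φ, hφ, w, hw⟩ := hAC t τ hτt hτBot x
      (hB.subset (Set.range_subset_iff.2 hxB)) himg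
    have hwA : w ∈ 𝔸 t :=
      Stmt7Aux.ol_subset_ol hComp (fun u hu => hBtAbs t B hB u hu)
        (hτBot.comp hφ.tendsto_atTop) (fun k => hxB (φ k)) hw
    have h0 : Tendsto (fun k => EMetric.infEdist (S t (τ (φ k)) (x (φ k))) (𝔸 t))
        atTop (nhds 0) := by
      have hc := (EMetric.continuous_infEdist (s := 𝔸 t)).tendsto w
      have := hc.comp hw
      rwa [EMetric.infEdist_zero_of_mem hwA] at this
    exact hε.not_ge (ge_of_tendsto' h0 (fun k => (hlt (φ k)).le))
  exact ⟨𝔸, hcomp, hinv, hattr, hbdd⟩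
end

section
/- Let X be a Banach space and let {S(t,s) : t ≥ s ∈ ℝ} be a pullback strongly bounded evolution process on X such that S(t,s) = L(t,s) + U(t,s) for all t ≥ s, where: there is a function k : [0,∞) × [0,∞) → ℝ, non-increasing in its first variable, with k(σ,r) → 0 as σ → ∞ for each fixed r, such that ‖L(t,s)x‖ ≤ k(t−s, r) whenever s ≤ t and ‖x‖ ≤ r; and each U(t,s) is a compact map, i.e. U(t,s) sends bounded subsets of X to relatively compact subsets of X. Then the evolution process {S(t,s) : t ≥ s ∈ ℝ} is pullback asymptotically compact. -/
open Filter Bornology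

/-- Sufficient condition for pullback asymptotic compactness: a pullback
strongly bounded evolution process `S = L + U` on a Banach space, where
`‖L(t,s)x‖ ≤ k(t−s,r)` for `‖x‖ ≤ r` with `k(·,r)` non-increasing and tending
to `0` at `∞`, and each `U(t,s)` is a compact map, is pullback asymptotically
compact. -/
theorem stmt8
    {X : Type*} [NormedAddCommGroup X] [NormedSpace ℝ X] [CompleteSpace X]
    (S L U : ℝ → ℝ → X → X)
    -- `S` is an evolution process:
    (hId : ∀ τ : ℝ, ∀ x : X, S τ τ x = x)
    (hComp : ∀ t σ τ : ℝ, τ ≤ σ → σ ≤ t → ∀ x : X, S t σ (S σ τ x) = S t τ x)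
    (hCont : ContinuousOn (fun p : (ℝ × ℝ) × X => S p.1.1 p.1.2 p.2)
      {p : (ℝ × ℝ) × X | p.1.2 ≤ p.1.1})
    -- `S` is pullback strongly bounded:
    (hSB : ∀ t : ℝ, ∀ B : Set X, IsBounded B →
      IsBounded (⋃ τ ∈ Set.Iic t, ⋃ r ∈ Set.Iic τ, S τ r '' B))
    -- decomposition `S = L + U`:
    (hDecomp : ∀ t s : ℝ, s ≤ t → ∀ x : X, S t s x = L t s x + U t s x)
    -- decay of the `L` part:
    (k : ℝ → ℝ → ℝ)
    (hkMono : ∀ r : ℝ, 0 ≤ r → ∀ σ₁ σ₂ : ℝ, 0 ≤ σ₁ → σ₁ ≤ σ₂ → k σ₂ r ≤ k σ₁ r)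
    (hkLim : ∀ r : ℝ, 0 ≤ r → Tendsto (fun σ => k σ r) atTop (nhds 0))
    (hL : ∀ s t : ℝ, s ≤ t → ∀ r : ℝ, ∀ x : X, ‖x‖ ≤ r → ‖L t s x‖ ≤ k (t - s) r)
    -- compactness of the `U` part:
    (hU : ∀ t s : ℝ, s ≤ t → ∀ B : Set X, IsBounded B →
      IsCompact (closure (U t s '' B))) :
    -- conclusion: `S` is pullback asymptotically compact
    ∀ t : ℝ, ∀ τ : ℕ → ℝ, (∀ n, τ n ≤ t) → Tendsto τ atTop atBot →
      ∀ x : ℕ → X, IsBounded (Set.range x) →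
        IsBounded (Set.range fun n => S t (τ n) (x n)) →
        ∃ φ : ℕ → ℕ, StrictMono φ ∧ ∃ y : X,
          Tendsto (fun n => S t (τ (φ n)) (x (φ n))) atTop (nhds y) := by
  intro t τ hτt hτ x hx _hbdd
  set u : ℕ → X := fun n => S t (τ n) (x n) with hu
  set B : Set X := Set.range x with hB
  set D : Set X := ⋃ τ' ∈ Set.Iic t, ⋃ r ∈ Set.Iic τ', S τ' r '' B with hDdef
  have hD : IsBounded D := hSB t B hx
  obtain ⟨r₀, hr₀⟩ := isBounded_iff_forall_norm_le.1 hD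
  have hx0D : x 0 ∈ D := by
    refine Set.mem_iUnion₂.2 ⟨τ 0, hτt 0, Set.mem_iUnion₂.2 ⟨τ 0, Set.mem_Iic.2 le_rfl, ?_⟩⟩
    exact ⟨x 0, Set.mem_range_self 0, hId (τ 0) (x 0)⟩
  have hr₀0 : (0 : ℝ) ≤ r₀ := le_trans (norm_nonneg _) (hr₀ _ hx0D)
  have hTB : TotallyBounded (Set.range u) := by
    rw [Metric.totallyBounded_iff]
    intro ε hε
    obtain ⟨σ₀, hσ₀⟩ := (Metric.tendsto_atTop.1 (hkLim r₀ hr₀0)) (ε / 2) (half_pos hε)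
    set σ : ℝ := max σ₀ 0 with hσdef
    have hσk : k σ r₀ < ε / 2 := by
      have := hσ₀ σ (le_max_left _ _)
      rw [Real.dist_eq, sub_zero] at this
      exact lt_of_le_of_lt (le_abs_self _) this
    set s : ℝ := t - σ with hsdef
    have hst : s ≤ t := by
      have : (0 : ℝ) ≤ σ := le_max_right _ _
      linarith
    obtain ⟨N, hN⟩ := (hτ.eventually (eventually_le_atBot s)).exists_forall_of_atTop
    have hK : IsCompact (closure (U t s '' D)) := hU t s hst D hD
    obtain ⟨F, hFfin, hFcov⟩ :=
      Metric.totallyBounded_iff.1 hK.totallyBounded (ε / 2) (half_pos hε)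
    refine ⟨F ∪ u '' {n | n < N}, hFfin.union ((Set.finite_Iio N).image _), ?_⟩
    rintro a ⟨n, rfl⟩
    by_cases hn : τ n ≤ s
    · set y : X := S s (τ n) (x n) with hy
      have hyD : y ∈ D := by
        refine Set.mem_iUnion₂.2 ⟨s, hst, Set.mem_iUnion₂.2 ⟨τ n, hn, ?_⟩⟩
        exact ⟨x n, Set.mem_range_self n, rfl⟩
      have hdec : u n = L t s y + U t s y := by
        rw [hu]
        simp only
        rw [← hComp t s (τ n) hn hst, hDecomp t s hst]
      have hUy : U t s y ∈ closure (U t s '' D) :=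
        subset_closure ⟨y, hyD, rfl⟩
      obtain ⟨c, hcF, hc⟩ := Set.mem_iUnion₂.1 (hFcov hUy)
      refine Set.mem_iUnion₂.2 ⟨c, Or.inl hcF, ?_⟩
      have h1 : dist (u n) (U t s y) < ε / 2 := by
        rw [hdec, dist_eq_norm, add_sub_cancel_right]
        have hts : t - s = σ := by rw [hsdef]; ring
        have := hL s t hst r₀ y (hr₀ y hyD)
        rw [hts] at this
        exact lt_of_le_of_lt this hσk
      have := dist_triangle (u n) (U t s y) c
      have : dist (u n) c < ε / 2 + ε / 2 :=
        lt_of_le_of_lt this (add_lt_add h1 hc)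
      simpa [Metric.mem_ball, add_halves] using this
    · refine Set.mem_iUnion₂.2 ⟨u n, Or.inr ⟨n, ?_, rfl⟩, Metric.mem_ball_self hε⟩
      by_contra h
      exact hn (hN n (le_of_not_gt h))
  have hKA : IsCompact (closure (Set.range u)) :=
    TotallyBounded.isCompact_of_isClosed hTB.closure isClosed_closure
  obtain ⟨y, _, φ, hφ, hconv⟩ :=
    hKA.tendsto_subseq (fun n => subset_closure (Set.mem_range_self n))
  exact ⟨φ, hφ, y, hconv⟩
end
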